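/- Let {(C_k, ∂_k)}_{k ∈ ℤ/3ℤ} be chain complexes over 𝔽 = ℤ/2ℤ, and {f_k : C_k → C_{k+1}}_{k ∈ ℤ/3ℤ} chain maps such that (1) each composite f_{k+1} ∘ f_k is chain-homotopic to zero via a chain homotopy H_k (i.e. ∂_{k+2} ∘ H_k + H_k ∘ ∂_k = f_{k+1} ∘ f_k), and (2) each map ψ_k = f_{k+2} ∘ H_k + H_{k+1} ∘ f_k : C_k → C_k induces an isomorphism on homology. Then the induced sequence on homology ⋯ → H_*(C_{k-1}) → H_*(C_k) → H_*(C_{k+1}) → ⋯ is exact. -/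
import Mathlib


/-- Exactness of the induced sequence on homology at the middle spot, stated
elementwise: a cycle `x` maps to a boundary under `g` iff it agrees, up to a
boundary, with the image of a cycle under `f`. -/
def ExactOnHomology {A B C : Type*} [AddCommGroup A] [Module (ZMod 2) A]
    [AddCommGroup B] [Module (ZMod 2) B] [AddCommGroup C] [Module (ZMod 2) C]
    (dA : A →ₗ[ZMod 2] A) (dB : B →ₗ[ZMod 2] B) (dC : C →ₗ[ZMod 2] C)
    (f : A →ₗ[ZMod 2] B) (g : B →ₗ[ZMod 2] C) : Prop :=
  ∀ x : B, dB x = 0 →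
    ((∃ z : C, g x = dC z) ↔ ∃ (y : A) (w : B), dA y = 0 ∧ x = f y + dB w)

/-- A chain map `f` induces an isomorphism on homology, stated elementwise
(surjectivity and injectivity on homology). -/
def InducesHomologyIso {A B : Type*} [AddCommGroup A] [Module (ZMod 2) A]
    [AddCommGroup B] [Module (ZMod 2) B]
    (dA : A →ₗ[ZMod 2] A) (dB : B →ₗ[ZMod 2] B) (f : A →ₗ[ZMod 2] B) : Prop :=
  (∀ x : B, dB x = 0 → ∃ (y : A) (z : B), dA y = 0 ∧ x = f y + dB z) ∧
  (∀ x : A, dA x = 0 → (∃ z : B, f x = dB z) → ∃ w : A, x = dA w)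

lemma add_self_zmod2' {M : Type*} [AddCommGroup M] [Module (ZMod 2) M] (a : M) :
    a + a = 0 := by
  have h : (2 : ZMod 2) • a = 0 := by
    have : (2 : ZMod 2) = 0 := rfl
    rw [this, zero_smul]
  simpa [two_smul] using h

lemma char2_cancel' {M : Type*} [AddCommGroup M] [Module (ZMod 2) M] {a b c : M}
    (h : a + b = c) : a = c + b := by
  rw [← h, add_assoc, add_self_zmod2', add_zero]

lemma zsmul_two_zmod2 {M : Type*} [AddCommGroup M] [Module (ZMod 2) M] (a : M) :
    (2 : ℤ) • a = 0 := by
  have h : ((2 : ℤ) : ZMod 2) = 0 := by decide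
  rw [← Int.cast_smul_eq_zsmul (ZMod 2), h, zero_smul]

lemma zsmul_three_zmod2 {M : Type*} [AddCommGroup M] [Module (ZMod 2) M] (a : M) :
    (3 : ℤ) • a = a := by
  have h : ((3 : ℤ) : ZMod 2) = 1 := by decide
  rw [← Int.cast_smul_eq_zsmul (ZMod 2), h, one_smul]

lemma aux_exact_one_spot {C₀ C₁ C₂ : Type*}
    [AddCommGroup C₀] [Module (ZMod 2) C₀]
    [AddCommGroup C₁] [Module (ZMod 2) C₁]
    [AddCommGroup C₂] [Module (ZMod 2) C₂]
    (d₀ : C₀ →ₗ[ZMod 2] C₀) (d₁ : C₁ →ₗ[ZMod 2] C₁) (d₂ : C₂ →ₗ[ZMod 2] C₂)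
    (hd₀ : d₀ ∘ₗ d₀ = 0)
    (f₀ : C₀ →ₗ[ZMod 2] C₁) (f₁ : C₁ →ₗ[ZMod 2] C₂) (f₂ : C₂ →ₗ[ZMod 2] C₀)
    (hf₀ : d₁ ∘ₗ f₀ = f₀ ∘ₗ d₀) (hf₁ : d₂ ∘ₗ f₁ = f₁ ∘ₗ d₁)
    (hf₂ : d₀ ∘ₗ f₂ = f₂ ∘ₗ d₂)
    (H₀ : C₀ →ₗ[ZMod 2] C₂) (H₁ : C₁ →ₗ[ZMod 2] C₀) (H₂ : C₂ →ₗ[ZMod 2] C₁)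
    (hH₀ : d₂ ∘ₗ H₀ + H₀ ∘ₗ d₀ = f₁ ∘ₗ f₀)
    (hH₁ : d₀ ∘ₗ H₁ + H₁ ∘ₗ d₁ = f₂ ∘ₗ f₁)
    (hH₂ : d₁ ∘ₗ H₂ + H₂ ∘ₗ d₂ = f₀ ∘ₗ f₂)
    (hψ₀ : InducesHomologyIso d₀ d₀ (f₂ ∘ₗ H₀ + H₁ ∘ₗ f₀))
    (hψ₁ : InducesHomologyIso d₁ d₁ (f₀ ∘ₗ H₁ + H₂ ∘ₗ f₁)) :
    ExactOnHomology d₀ d₁ d₂ f₀ f₁ := by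
  have pd₀ : ∀ a, d₀ (d₀ a) = 0 := fun a => by
    simpa using LinearMap.congr_fun hd₀ a
  have pf₀ : ∀ a, d₁ (f₀ a) = f₀ (d₀ a) := fun a => by
    simpa using LinearMap.congr_fun hf₀ a
  have pf₂ : ∀ a, d₀ (f₂ a) = f₂ (d₂ a) := fun a => by
    simpa using LinearMap.congr_fun hf₂ a
  have pH₀ : ∀ a, d₂ (H₀ a) + H₀ (d₀ a) = f₁ (f₀ a) := fun a => by
    simpa using LinearMap.congr_fun hH₀ a
  have pH₁ : ∀ a, d₀ (H₁ a) + H₁ (d₁ a) = f₂ (f₁ a) := fun a => by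
    simpa using LinearMap.congr_fun hH₁ a
  have pH₂ : ∀ a, d₁ (H₂ a) + H₂ (d₂ a) = f₀ (f₂ a) := fun a => by
    simpa using LinearMap.congr_fun hH₂ a
  intro x hx
  constructor
  · rintro ⟨z, hz⟩
    -- the element y₀ = H₁ x + f₂ z is a cycle
    set y₀ : C₀ := H₁ x + f₂ z with hy₀def
    have hy₀ : d₀ y₀ = 0 := by
      have h1 : d₀ (H₁ x) = f₂ (f₁ x) := by
        have := pH₁ x
        rw [hx, map_zero, add_zero] at this
        exact this
      have : d₀ y₀ = f₂ (f₁ x) + f₂ (d₂ z) := by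
        rw [hy₀def, map_add, h1, pf₂]
      rw [this, hz, add_self_zmod2']
    -- ψ₁ x = f₀ y₀ + d₁ (H₂ z)
    have hψx : f₀ (H₁ x) + H₂ (f₁ x) = f₀ y₀ + d₁ (H₂ z) := by
      have h2 : H₂ (d₂ z) = f₀ (f₂ z) + d₁ (H₂ z) := by
        have h := pH₂ z
        rw [add_comm] at h
        exact char2_cancel' h
      rw [hz, h2, hy₀def, map_add]
      abel
    -- use surjectivity of ψ₀ on homology
    obtain ⟨y₁, v₁, hy₁, hy₀eq⟩ := hψ₀.1 y₀ hy₀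
    -- key identity: ψ₁ (f₀ y₁) = f₀ (ψ₀ y₁) + d₁ (H₂ (H₀ y₁)) for a cycle y₁
    have hkey : f₀ (H₁ (f₀ y₁)) + H₂ (f₁ (f₀ y₁))
        = f₀ (f₂ (H₀ y₁) + H₁ (f₀ y₁)) + d₁ (H₂ (H₀ y₁)) := by
      have h3 : f₁ (f₀ y₁) = d₂ (H₀ y₁) := by
        have := pH₀ y₁
        rw [hy₁, map_zero, add_zero] at this
        exact this.symm
      have h4 : H₂ (d₂ (H₀ y₁)) = f₀ (f₂ (H₀ y₁)) + d₁ (H₂ (H₀ y₁)) := by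
        have h := pH₂ (H₀ y₁)
        rw [add_comm] at h
        exact char2_cancel' h
      rw [h3, h4, map_add]
      abel
    -- the cycle x + f₀ y₁
    have hcyc : d₁ (x + f₀ y₁) = 0 := by
      simp [pf₀, hx, hy₁]
    -- ψ₁ (x + f₀ y₁) is a boundary
    have hbd : ∃ w : C₁,
        (f₀ ∘ₗ H₁ + H₂ ∘ₗ f₁) (x + f₀ y₁) = d₁ w := by
      refine ⟨f₀ v₁ + H₂ z + H₂ (H₀ y₁), ?_⟩
      have expand : (f₀ ∘ₗ H₁ + H₂ ∘ₗ f₁) (x + f₀ y₁)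
          = (f₀ (H₁ x) + H₂ (f₁ x)) + (f₀ (H₁ (f₀ y₁)) + H₂ (f₁ (f₀ y₁))) := by
        simp only [LinearMap.add_apply, LinearMap.comp_apply, map_add]
        try abel
      have h5 : f₀ y₀ = f₀ (f₂ (H₀ y₁) + H₁ (f₀ y₁)) + d₁ (f₀ v₁) := by
        rw [hy₀eq]
        simp only [LinearMap.add_apply, LinearMap.comp_apply, map_add, pf₀ v₁]
        try abel
      rw [expand, hψx, hkey, h5]
      simp only [map_add]
      abel_nf
      simp only [zsmul_two_zmod2, zsmul_three_zmod2, zero_add, add_zero]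
      try abel
    -- injectivity of ψ₁ on homology
    obtain ⟨w, hw⟩ := hψ₁.2 (x + f₀ y₁) hcyc hbd
    refine ⟨y₁, w, hy₁, ?_⟩
    have h6 := char2_cancel' hw
    rw [h6, add_comm]
  · rintro ⟨y, w, hy, hxw⟩
    refine ⟨H₀ y + f₁ w, ?_⟩
    have h1 : f₁ (f₀ y) = d₂ (H₀ y) := by
      have := pH₀ y
      rw [hy, map_zero, add_zero] at this
      exact this.symm
    have h2 : f₁ (d₁ w) = d₂ (f₁ w) := by
      simpa using (LinearMap.congr_fun hf₁ w).symm
    rw [hxw, map_add, h1, h2, map_add]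

/-- The homological-algebra triangle detection lemma (Lemma 1 of the paper):
if the composites `f_{k+1} ∘ f_k` are null-homotopic via homotopies `H_k`, and
each `ψ_k = f_{k+2} ∘ H_k + H_{k+1} ∘ f_k` induces an isomorphism on homology,
then the induced sequence on homology is exact (at each of the three spots). -/
theorem exact_triangle_criterion
    {C₀ C₁ C₂ : Type*}
    [AddCommGroup C₀] [Module (ZMod 2) C₀]
    [AddCommGroup C₁] [Module (ZMod 2) C₁]
    [AddCommGroup C₂] [Module (ZMod 2) C₂]
    (d₀ : C₀ →ₗ[ZMod 2] C₀) (d₁ : C₁ →ₗ[ZMod 2] C₁) (d₂ : C₂ →ₗ[ZMod 2] C₂)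
    (hd₀ : d₀ ∘ₗ d₀ = 0) (hd₁ : d₁ ∘ₗ d₁ = 0) (hd₂ : d₂ ∘ₗ d₂ = 0)
    (f₀ : C₀ →ₗ[ZMod 2] C₁) (f₁ : C₁ →ₗ[ZMod 2] C₂) (f₂ : C₂ →ₗ[ZMod 2] C₀)
    (hf₀ : d₁ ∘ₗ f₀ = f₀ ∘ₗ d₀) (hf₁ : d₂ ∘ₗ f₁ = f₁ ∘ₗ d₁)
    (hf₂ : d₀ ∘ₗ f₂ = f₂ ∘ₗ d₂)
    (H₀ : C₀ →ₗ[ZMod 2] C₂) (H₁ : C₁ →ₗ[ZMod 2] C₀) (H₂ : C₂ →ₗ[ZMod 2] C₁)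
    (hH₀ : d₂ ∘ₗ H₀ + H₀ ∘ₗ d₀ = f₁ ∘ₗ f₀)
    (hH₁ : d₀ ∘ₗ H₁ + H₁ ∘ₗ d₁ = f₂ ∘ₗ f₁)
    (hH₂ : d₁ ∘ₗ H₂ + H₂ ∘ₗ d₂ = f₀ ∘ₗ f₂)
    (hψ₀ : InducesHomologyIso d₀ d₀ (f₂ ∘ₗ H₀ + H₁ ∘ₗ f₀))
    (hψ₁ : InducesHomologyIso d₁ d₁ (f₀ ∘ₗ H₁ + H₂ ∘ₗ f₁))
    (hψ₂ : InducesHomologyIso d₂ d₂ (f₁ ∘ₗ H₂ + H₀ ∘ₗ f₂)) :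
    ExactOnHomology d₂ d₀ d₁ f₂ f₀ ∧ ExactOnHomology d₀ d₁ d₂ f₀ f₁ ∧
      ExactOnHomology d₁ d₂ d₀ f₁ f₂ :=
  ⟨aux_exact_one_spot d₂ d₀ d₁ hd₂ f₂ f₀ f₁ hf₂ hf₀ hf₁ H₂ H₀ H₁ hH₂ hH₀ hH₁ hψ₂ hψ₀,
   aux_exact_one_spot d₀ d₁ d₂ hd₀ f₀ f₁ f₂ hf₀ hf₁ hf₂ H₀ H₁ H₂ hH₀ hH₁ hH₂ hψ₀ hψ₁,
   aux_exact_one_spot d₁ d₂ d₀ hd₁ f₁ f₂ f₀ hf₁ hf₂ hf₀ H₁ H₂ H₀ hH₁ hH₂ hH₀ hψ₁ hψ₂⟩
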